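/- Let r ≥ 1 and let λ, μ ∈ ℝ^r satisfy λ_1 ≥ … ≥ λ_r ≥ 0 and μ_1 ≥ … ≥ μ_r ≥ 0. Suppose λ − μ = Σ_{i=1}^{r} c_i α_i with every c_i a positive integer, where α_i = e_i − e_{i+1} for 1 ≤ i ≤ r−1 and α_r = e_r. Then the affine dimension of BZ_{λ,μ} = {T ∈ BZ_λ : wt(T) = μ} equals the affine dimension of BZ_λ minus r. -/

import Mathlib

open scoped BigOperators

noncomputable section

/-- 1-based standard basis vector `e i` of `ℝ^r`. -/
def stdVec (r i : ℕ) : Fin r → ℝ := fun k => if (k : ℕ) + 1 = i then 1 else 0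

/-- Type B/C BZ inequalities. -/
def IsBZBC (r : ℕ) (x y : ℕ → ℕ → ℝ) : Prop :=
  (∀ i j, 1 ≤ i → i ≤ j → j ≤ r → y i j ≤ x i j) ∧
  (∀ i j, 1 ≤ i → i < j → j ≤ r → y i j ≤ x (i + 1) j) ∧
  (∀ i j, 1 ≤ i → i ≤ j → j + 1 ≤ r → x i (j + 1) ≤ y i j ∧ x (i + 1) (j + 1) ≤ y i j) ∧
  (∀ i, 1 ≤ i → i ≤ r → 0 ≤ y i r)

def BZsetBC (r : ℕ) (lam : ℕ → ℝ) : Set ((ℕ → ℕ → ℝ) × (ℕ → ℕ → ℝ)) :=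
  {p | (∀ j, 1 ≤ j → j ≤ r → p.1 1 j = lam j) ∧ IsBZBC r p.1 p.2 ∧
       (∀ i j, ¬(1 ≤ i ∧ i ≤ j ∧ j ≤ r) → p.1 i j = 0) ∧
       (∀ i j, ¬(1 ≤ i ∧ i ≤ j ∧ j ≤ r) → p.2 i j = 0)}

def wtBC (r : ℕ) (p : (ℕ → ℕ → ℝ) × (ℕ → ℕ → ℝ)) (i : ℕ) : ℝ :=
  (∑ j ∈ Finset.Icc i r, p.1 i j) + (∑ j ∈ Finset.Icc (i + 1) r, p.1 (i + 1) j)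
    - 2 * ∑ j ∈ Finset.Icc i r, p.2 i j

def IsBZD (r : ℕ) (x y : ℕ → ℕ → ℝ) : Prop :=
  (∀ i j, 1 ≤ i → i ≤ j → j + 1 ≤ r → y i j ≤ x i j) ∧
  (∀ i j, 1 ≤ i → i < j → j + 1 ≤ r → y i j ≤ x (i + 1) j) ∧
  (∀ i j, 1 ≤ i → i ≤ j → j + 1 ≤ r → x i (j + 1) ≤ y i j ∧ x (i + 1) (j + 1) ≤ y i j) ∧
  (∀ i, 1 ≤ i → i + 2 ≤ r → y i (r - 1) ≤ x i r + x (i + 1) r + min (x i (r - 1)) (x (i + 1) (r - 1))) ∧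
  (y (r - 1) (r - 1) ≤ x (r - 1) r + x r r + x (r - 1) (r - 1))

def BZsetD (r : ℕ) (lam : ℕ → ℝ) : Set ((ℕ → ℕ → ℝ) × (ℕ → ℕ → ℝ)) :=
  {p | (∀ j, 1 ≤ j → j ≤ r → p.1 1 j = lam j) ∧ IsBZD r p.1 p.2 ∧
       (∀ i j, ¬(1 ≤ i ∧ i ≤ j ∧ j ≤ r) → p.1 i j = 0) ∧
       (∀ i j, ¬(1 ≤ i ∧ i ≤ j ∧ j + 1 ≤ r) → p.2 i j = 0)}

def wtD (r : ℕ) (p : (ℕ → ℕ → ℝ) × (ℕ → ℕ → ℝ)) (i : ℕ) : ℝ :=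
  (∑ j ∈ Finset.Icc i r, p.1 i j) + (∑ j ∈ Finset.Icc (i + 1) r, p.1 (i + 1) j)
    - 2 * ∑ j ∈ Finset.Icc i (r - 1), p.2 i j

/-- Affine dimension of a subset of a real vector space. -/
def affDim {V : Type*} [AddCommGroup V] [Module ℝ V] (A : Set V) : ℕ :=
  Module.finrank ℝ (vectorSpan ℝ A)

def simpleRootB (r i : ℕ) : Fin r → ℝ :=
  if i = r then stdVec r r else stdVec r i - stdVec r (i + 1)

def simpleRootC (r i : ℕ) : Fin r → ℝ :=
  if i = r then (2 : ℝ) • stdVec r r else stdVec r i - stdVec r (i + 1)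

def simpleRootD (r i : ℕ) : Fin r → ℝ :=
  if i = r then stdVec r (r - 1) + stdVec r r else stdVec r i - stdVec r (i + 1)

def posRootsB (r : ℕ) : Set (Fin r → ℝ) :=
  {v | ∃ i j, 1 ≤ i ∧ i < j ∧ j ≤ r ∧ (v = stdVec r i - stdVec r j ∨ v = stdVec r i + stdVec r j)}
    ∪ {v | ∃ i, 1 ≤ i ∧ i ≤ r ∧ v = stdVec r i}

def posRootsC (r : ℕ) : Set (Fin r → ℝ) :=
  {v | ∃ i j, 1 ≤ i ∧ i < j ∧ j ≤ r ∧ (v = stdVec r i - stdVec r j ∨ v = stdVec r i + stdVec r j)}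
    ∪ {v | ∃ i, 1 ≤ i ∧ i ≤ r ∧ v = (2 : ℝ) • stdVec r i}

def posRootsD (r : ℕ) : Set (Fin r → ℝ) :=
  {v | ∃ i j, 1 ≤ i ∧ i < j ∧ j ≤ r ∧ (v = stdVec r i - stdVec r j ∨ v = stdVec r i + stdVec r j)}

/-- `f` is a quasi-polynomial of degree exactly `d` on positive integers. -/
def IsQuasiPolyOfDegree (f : ℕ → ℕ) (d : ℕ) : Prop :=
  ∃ T : ℕ, 0 < T ∧ ∃ P : ℕ → Polynomial ℚ,
    (∀ k < T, (P k).degree = (d : ℕ)) ∧ ∀ N : ℕ, 0 < N → (f N : ℚ) = (P (N % T)).eval (N : ℚ)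

end

/-!
Each entry of a pattern in `BZ_λ` is confined to an interval with ends `Λ_{i+j-1}` or `Λ_{i+j}`
and `Λ_{j-i+1}`, where `Λ` is `λ` extended by zero, so the direction space of `BZ_λ` lies in the
space `W` of patterns supported on the entries whose interval is nondegenerate. If some `q` in
`BZ_λ` can be moved a little in every direction of `W`, the affine span of `BZ_λ` is `q + W` and
that of the fibre through `q` is `q + (W ∩ ker wt)`; since `wt` maps `W` onto `ℝ^r` (every row
has a free entry `y_{i,j}`), the dimensions differ by `r`.

Such a `q` of weight `μ` exists. Placing every entry strictly inside its interval at decreasing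
relative heights gives a movable pattern `f`. Because the partial sums of `λ - μ` are positive,
every weight close to `μ` is the weight of some pattern, constructed row by row; realising
`μ + δ (μ - wt f)` and averaging with `f` gives `q`.
-/

open Filter Finset Module Topology

section General

variable {E F : Type*} [AddCommGroup E] [Module ℝ E] [AddCommGroup F] [Module ℝ F]

theorem vectorSpan_sep_eq_inf_ker {S : Set E} {W : Submodule ℝ E} (hSW : vectorSpan ℝ S ≤ W)
    {q : E} (hq : q ∈ S) (hint : ∀ v ∈ W, ∀ᶠ s in 𝓝 (0 : ℝ), q + s • v ∈ S) (L : E →ₗ[ℝ] F) :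
    vectorSpan ℝ {p ∈ S | L p = L q} = W ⊓ LinearMap.ker L := by
  apply le_antisymm
  · refine le_inf ((vectorSpan_mono ℝ fun p hp => hp.1).trans hSW) ?_
    rw [vectorSpan_def, Submodule.span_le]
    rintro _ ⟨p, hp, p', hp', rfl⟩
    simp [hp.2, hp'.2]
  · rintro v ⟨hvW, hvL⟩
    obtain ⟨s, hs, hs0⟩ :=
      ((hint v hvW).filter_mono nhdsWithin_le_nhds |>.and self_mem_nhdsWithin).exists
        (f := 𝓝[≠] (0 : ℝ))
    have hmem : (q + s • v) -ᵥ q ∈ vectorSpan ℝ {p ∈ S | L p = L q} :=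
      vsub_mem_vectorSpan ℝ ⟨hs, by simp [LinearMap.mem_ker.1 hvL]⟩ ⟨hq, rfl⟩
    simpa [smul_smul, inv_mul_cancel₀ hs0] using Submodule.smul_mem _ s⁻¹ hmem

theorem vectorSpan_eq_of_eventually_add_smul_mem {S : Set E} {W : Submodule ℝ E}
    (hSW : vectorSpan ℝ S ≤ W) {q : E} (hq : q ∈ S)
    (hint : ∀ v ∈ W, ∀ᶠ s in 𝓝 (0 : ℝ), q + s • v ∈ S) : vectorSpan ℝ S = W := by
  simpa using vectorSpan_sep_eq_inf_ker hSW hq hint (0 : E →ₗ[ℝ] ℝ)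

theorem Convex.eventually_combo_add_smul_mem {S : Set E} (hS : Convex ℝ S) {p f v : E}
    (hp : p ∈ S) (hf : ∀ᶠ s in 𝓝 (0 : ℝ), f + s • v ∈ S) {a b : ℝ} (ha : 0 ≤ a) (hb : 0 < b)
    (hab : a + b = 1) : ∀ᶠ s in 𝓝 (0 : ℝ), a • p + b • f + s • v ∈ S := by
  have hlim : Tendsto (fun s : ℝ => s / b) (𝓝 0) (𝓝 0) := by
    simpa using (tendsto_id (x := 𝓝 (0 : ℝ))).div_const b
  filter_upwards [hlim.eventually hf] with s hs
  convert hS hp hs ha hb.le hab using 1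
  rw [smul_add, smul_smul, mul_div_cancel₀ s hb.ne']
  abel

end General

theorem finrank_inf_ker_add_finrank {K E F : Type*} [DivisionRing K] [AddCommGroup E] [Module K E]
    [AddCommGroup F] [Module K F] {W : Submodule K E} [FiniteDimensional K W] (L : E →ₗ[K] F)
    (hL : W.map L = ⊤) : finrank K ↥(W ⊓ LinearMap.ker L) + finrank K F = finrank K W := by
  have h := (L.domRestrict W).finrank_range_add_finrank_ker
  rw [LinearMap.range_domRestrict, hL, finrank_top, LinearMap.ker_domRestrict,
    ← Submodule.finrank_map_subtype_eq, Submodule.map_comap_subtype] at h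
  omega

theorem Filter.eventually_forall_of_le {α : Type*} {l : Filter α} {r : ℕ} {Q : ℕ → ℕ → Prop}
    {P : ℕ → ℕ → α → Prop} (hQ : ∀ i j, Q i j → i ≤ r ∧ j ≤ r)
    (h : ∀ i j, Q i j → ∀ᶠ s in l, P i j s) : ∀ᶠ s in l, ∀ i j, Q i j → P i j s := by
  have hfin : ∀ᶠ s in l, ∀ i j : Fin (r + 1), Q i j → P i j s :=
    eventually_all.2 fun i => eventually_all.2 fun j => eventually_imp_distrib_left.2 (h i j)
  filter_upwards [hfin] with s hs i j hij
  exact hs ⟨i, by grind⟩ ⟨j, by grind⟩ hij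

theorem Finset.exists_le_le_sum_eq {ι : Type*} {s : Finset ι} {A B : ι → ℝ}
    (hAB : ∀ i ∈ s, A i ≤ B i) {T : ℝ} (hA : ∑ i ∈ s, A i ≤ T) (hB : T ≤ ∑ i ∈ s, B i) :
    ∃ y : ι → ℝ, (∀ i ∈ s, A i ≤ y i ∧ y i ≤ B i) ∧ ∑ i ∈ s, y i = T := by
  set t := (T - ∑ i ∈ s, A i) / (∑ i ∈ s, B i - ∑ i ∈ s, A i)
  have ht0 : 0 ≤ t := div_nonneg (by linarith) (by linarith)
  have ht1 : t ≤ 1 := div_le_one_of_le₀ (by linarith) (by linarith)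
  refine ⟨fun i => A i + t * (B i - A i), fun i hi => ⟨?_, ?_⟩, ?_⟩
  · nlinarith [hAB i hi]
  · nlinarith [hAB i hi]
  · rw [sum_add_distrib, ← mul_sum, sum_sub_distrib]
    rcases eq_or_ne (∑ i ∈ s, B i - ∑ i ∈ s, A i) 0 with h | h
    · rw [h]
      linarith
    · rw [div_mul_cancel₀ _ h]
      ring

theorem min_sub_min_mem_Icc {a b : ℝ} (hab : a ≤ b) (d : ℝ) :
    min b d - min a d ∈ Set.Icc 0 (b - a) := by
  refine ⟨sub_nonneg.2 (min_le_min_right d hab), ?_⟩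
  rcases le_total b d with h | h <;> rcases le_total a d with h' | h' <;>
    simp only [min_eq_left, min_eq_right, h, h'] <;> linarith

theorem sum_Icc_succ_succ {M : Type*} [AddCommMonoid M] (f : ℕ → M) (a b : ℕ) :
    ∑ j ∈ Icc (a + 1) (b + 1), f j = ∑ j ∈ Icc a b, f (j + 1) := by
  rw [← map_add_right_Icc, sum_map]
  rfl

theorem interp_lt_or_degenerate {lb ub lb' ub' t t' : ℝ} (h : lb ≤ ub) (h' : lb' ≤ ub')
    (hlb : lb ≤ lb') (hub : ub ≤ ub') (ht : 0 ≤ t) (htt : t < t') (ht' : t' ≤ 1) :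
    lb + t * (ub - lb) < lb' + t' * (ub' - lb') ∨
      (lb + t * (ub - lb) = lb' + t' * (ub' - lb') ∧ ub ≤ lb ∧ ub' ≤ lb') := by
  by_cases hc : lb < ub'
  · left
    -- the difference is `(1 - t') (lb' - lb) + t' (ub' - ub) + (t' - t) (ub - lb)`
    have key : 0 < t' * (ub' - ub) + (t' - t) * (ub - lb) := by
      rcases hub.lt_or_eq with hub | rfl
      · nlinarith [mul_pos (by linarith : 0 < t') (sub_pos.2 hub)]
      · nlinarith [mul_pos (sub_pos.2 htt) (sub_pos.2 hc)]
    nlinarith [mul_nonneg (sub_nonneg.2 ht') (sub_nonneg.2 hlb)]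
  · right
    have e1 : lb' = lb := by linarith
    have e2 : ub' = lb := by linarith
    have e3 : ub = lb := by linarith
    rw [e1, e2, e3]
    simp

theorem eventually_interp_add_mul_le {lb ub lb' ub' t t' a b : ℝ} (h : lb ≤ ub) (h' : lb' ≤ ub')
    (hlb : lb ≤ lb') (hub : ub ≤ ub') (ht : 0 ≤ t) (htt : t < t') (ht' : t' ≤ 1)
    (ha : ub ≤ lb → a = 0) (hb : ub' ≤ lb' → b = 0) :
    ∀ᶠ s in 𝓝 (0 : ℝ), lb + t * (ub - lb) + s * a ≤ lb' + t' * (ub' - lb') + s * b := by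
  rcases interp_lt_or_degenerate h h' hlb hub ht htt ht' with hlt | ⟨heq, hdeg, hdeg'⟩
  · exact (ContinuousAt.eventually_lt (by fun_prop) (by fun_prop) (by simpa using hlt)).mono
      fun _ => le_of_lt
  · exact .of_forall fun s => by rw [heq, ha hdeg, hb hdeg']

abbrev BZPattern := (ℕ → ℕ → ℝ) × (ℕ → ℕ → ℝ)

theorem wtBC_add (r : ℕ) (p q : BZPattern) (i : ℕ) :
    wtBC r (p + q) i = wtBC r p i + wtBC r q i := by
  simp only [wtBC, Prod.fst_add, Prod.snd_add, Pi.add_apply, sum_add_distrib]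
  ring

theorem wtBC_smul (r : ℕ) (a : ℝ) (p : BZPattern) (i : ℕ) :
    wtBC r (a • p) i = a * wtBC r p i := by
  simp only [wtBC, Prod.smul_fst, Prod.smul_snd, Pi.smul_apply, smul_eq_mul, ← mul_sum]
  ring

def wtMap (r : ℕ) : BZPattern →ₗ[ℝ] (Fin r → ℝ) where
  toFun p k := wtBC r p (k + 1)
  map_add' p q := funext fun _ => wtBC_add r p q _
  map_smul' a p := funext fun _ => wtBC_smul r a p _

theorem wtMap_eq_wtMap_iff {r : ℕ} {p q : BZPattern} :
    wtMap r p = wtMap r q ↔ ∀ i, 1 ≤ i → i ≤ r → wtBC r p i = wtBC r q i := by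
  refine ⟨fun h i h1 h2 => ?_, fun h => funext fun k => h _ (by omega) k.isLt⟩
  obtain ⟨k, rfl⟩ : ∃ k, i = k + 1 := ⟨i - 1, by omega⟩
  exact congrFun h ⟨k, by omega⟩

theorem convex_BZsetBC (r : ℕ) (lam : ℕ → ℝ) : Convex ℝ (BZsetBC r lam) := by
  have comb {a b x y x' y' : ℝ} (ha : 0 ≤ a) (hb : 0 ≤ b) (h : x ≤ y) (h' : x' ≤ y') :
      a * x + b * x' ≤ a * y + b * y' := by gcongr
  rintro p ⟨ptop, ⟨p1, p2, p3, p4⟩, pz1, pz2⟩ q ⟨qtop, ⟨q1, q2, q3, q4⟩, qz1, qz2⟩ a b ha hb hab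
  refine ⟨fun j h1 h2 => ?_, ⟨fun i j h1 h2 h3 => ?_, fun i j h1 h2 h3 => ?_,
    fun i j h1 h2 h3 => ⟨?_, ?_⟩, fun i h1 h2 => ?_⟩, fun i j h => ?_, fun i j h => ?_⟩
  all_goals simp only [Prod.fst_add, Prod.snd_add, Prod.smul_fst, Prod.smul_snd, Pi.add_apply,
    Pi.smul_apply, smul_eq_mul]
  · rw [ptop j h1 h2, qtop j h1 h2, ← add_mul, hab, one_mul]
  · exact comb ha hb (p1 i j h1 h2 h3) (q1 i j h1 h2 h3)
  · exact comb ha hb (p2 i j h1 h2 h3) (q2 i j h1 h2 h3)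
  · exact comb ha hb (p3 i j h1 h2 h3).1 (q3 i j h1 h2 h3).1
  · exact comb ha hb (p3 i j h1 h2 h3).2 (q3 i j h1 h2 h3).2
  · simpa using comb ha hb (p4 i h1 h2) (q4 i h1 h2)
  · simp [pz1 i j h, qz1 i j h]
  · simp [pz2 i j h, qz2 i j h]

theorem simpleRootB_eq_sub (r i : ℕ) : simpleRootB r i = stdVec r i - stdVec r (i + 1) := by
  unfold simpleRootB
  split_ifs with h
  · subst h
    funext k
    simp [stdVec, k.isLt.ne]
  · rfl

theorem sum_Icc_sub_eq_of_eq_sum_smul_simpleRootB {r : ℕ} {lam mu : ℕ → ℝ} {c : ℕ → ℤ}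
    (hdiff : (fun k : Fin r => lam ((k : ℕ) + 1) - mu ((k : ℕ) + 1)) =
      ∑ i ∈ Icc 1 r, (c i : ℝ) • simpleRootB r i) {j : ℕ} (h1 : 1 ≤ j) (hj : j ≤ r) :
    ∑ k ∈ Icc 1 j, (lam k - mu k) = c j := by
  have hcoord : ∀ k ∈ Icc 1 j, lam k - mu k =
      ∑ i ∈ Icc 1 r, (c i : ℝ) * ((if k = i then 1 else 0) - if k = i + 1 then 1 else 0) := by
    intro k hk
    rw [mem_Icc] at hk
    simpa [Nat.sub_add_cancel hk.1, simpleRootB_eq_sub, stdVec] using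
      congrFun hdiff ⟨k - 1, by omega⟩
  have hinner : ∀ i ∈ Icc 1 r, ∑ k ∈ Icc 1 j,
      (c i : ℝ) * ((if k = i then 1 else 0) - if k = i + 1 then 1 else 0) =
        if i = j then (c i : ℝ) else 0 := by
    intro i hi
    rw [mem_Icc] at hi
    rw [← mul_sum, sum_sub_distrib, sum_ite_eq', sum_ite_eq']
    by_cases hij : i = j <;> simp only [hij, mem_Icc, if_true, if_false] <;> split_ifs <;>
      first | omega | simp
  rw [sum_congr rfl hcoord, sum_comm, sum_congr rfl hinner, sum_ite_eq',
    if_pos (mem_Icc.2 ⟨h1, hj⟩)]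

def extendZero (r : ℕ) (lam : ℕ → ℝ) (k : ℕ) : ℝ := if k ≤ r then lam k else 0

theorem extendZero_of_le {r k : ℕ} (lam : ℕ → ℝ) (h : k ≤ r) : extendZero r lam k = lam k :=
  if_pos h

theorem extendZero_of_lt {r k : ℕ} (lam : ℕ → ℝ) (h : r < k) : extendZero r lam k = 0 :=
  if_neg (by omega)

/-- Encodes `λ₁ ≥ ⋯ ≥ λᵣ ≥ 0 = λ_{r+1} = ⋯`. -/
def IsDominant (r : ℕ) (lam : ℕ → ℝ) : Prop :=
  AntitoneOn (extendZero r lam) (Set.Ici 1)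

theorem isDominant_of_succ_le {r : ℕ} {lam : ℕ → ℝ}
    (h : ∀ i, 1 ≤ i → i < r → lam (i + 1) ≤ lam i) (h0 : 1 ≤ r → 0 ≤ lam r) :
    IsDominant r lam := by
  refine antitoneOn_nat_Ici_of_succ_le fun i hi => ?_
  rcases lt_trichotomy (i + 1) (r + 1) with hlt | heq | hgt
  · rw [extendZero_of_le _ (by omega), extendZero_of_le _ (by omega)]
    exact h i hi (by omega)
  · rw [extendZero_of_lt _ (by omega), extendZero_of_le _ (by omega)]
    exact (Nat.succ_injective heq ▸ h0 (by omega))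
  · rw [extendZero_of_lt _ (by omega), extendZero_of_lt _ (by omega)]

namespace IsDominant

variable {r : ℕ} {lam : ℕ → ℝ}

theorem anti (h : IsDominant r lam) {a b : ℕ} (ha : 1 ≤ a) (hab : a ≤ b) :
    extendZero r lam b ≤ extendZero r lam a :=
  h (Set.mem_Ici.2 ha) (Set.mem_Ici.2 (ha.trans hab)) hab

theorem nonneg (h : IsDominant r lam) {k : ℕ} (hk : 1 ≤ k) : 0 ≤ extendZero r lam k := by
  have := h.anti hk (le_max_left k (r + 1))
  rwa [extendZero_of_lt lam ((Nat.lt_succ_self r).trans_le (le_max_right k (r + 1)))] at this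

theorem shift (h : IsDominant (r + 1) lam) : IsDominant r (fun k => lam (k + 1)) := by
  have heq : extendZero r (fun k => lam (k + 1)) = fun k => extendZero (r + 1) lam (k + 1) := by
    funext k
    simp only [extendZero, Nat.add_le_add_iff_right]
  rw [IsDominant, heq]
  exact fun a ha b hb hab => h (Set.mem_Ici.2 (by omega)) (Set.mem_Ici.2 (by omega)) (by omega)

theorem le_of_le (h : IsDominant r lam) {a b : ℕ} (ha : 1 ≤ a) (hab : a ≤ b) (hb : b ≤ r) :
    lam b ≤ lam a := by
  simpa [extendZero_of_le lam hb, extendZero_of_le lam (hab.trans hb)] using h.anti ha hab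

theorem nonneg_of_le (h : IsDominant r lam) {k : ℕ} (h1 : 1 ≤ k) (hk : k ≤ r) : 0 ≤ lam k := by
  simpa [extendZero_of_le lam hk] using h.nonneg h1

end IsDominant

section Bounds

variable {r : ℕ} {lam : ℕ → ℝ} {p : BZPattern}

theorem le_extendZero_of_mem_BZsetBC (hp : p ∈ BZsetBC r lam) {i : ℕ} (hi : 1 ≤ i) :
    ∀ j, i ≤ j → j ≤ r →
      p.1 i j ≤ extendZero r lam (j - i + 1) ∧ p.2 i j ≤ extendZero r lam (j - i + 1) := by
  obtain ⟨htop, ⟨h1, -, h3, -⟩, -, -⟩ := hp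
  induction i, hi using Nat.le_induction with
  | base =>
    intro j hj hjr
    have hx : p.1 1 j ≤ extendZero r lam (j - 1 + 1) := by
      rw [htop j hj hjr, Nat.sub_add_cancel hj, extendZero_of_le lam hjr]
    exact ⟨hx, (h1 1 j le_rfl hj hjr).trans hx⟩
  | succ i hi ih =>
    intro j hij hjr
    obtain ⟨k, rfl⟩ : ∃ k, j = k + 1 := ⟨j - 1, by omega⟩
    have hx : p.1 (i + 1) (k + 1) ≤ extendZero r lam (k + 1 - (i + 1) + 1) := by
      rw [show k + 1 - (i + 1) + 1 = k - i + 1 by omega]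
      exact (h3 i k hi (by omega) hjr).2.trans (ih k (by omega) (by omega)).2
    exact ⟨hx, (h1 (i + 1) (k + 1) (by omega) hij hjr).trans hx⟩

theorem extendZero_le_snd_of_mem_BZsetBC (hp : p ∈ BZsetBC r lam) {i : ℕ} (hi : 1 ≤ i)
    (hx : ∀ j, i ≤ j → j ≤ r → extendZero r lam (i + j - 1) ≤ p.1 i j) :
    ∀ j, i ≤ j → j ≤ r → extendZero r lam (i + j) ≤ p.2 i j := by
  obtain ⟨-, ⟨-, -, h3, h4⟩, -, -⟩ := hp
  intro j hij hjr
  rcases hjr.lt_or_eq with hjr | rfl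
  · have := hx (j + 1) (by omega) hjr
    rw [show i + (j + 1) - 1 = i + j by omega] at this
    exact this.trans (h3 i j hi hij hjr).1
  · rw [extendZero_of_lt lam (by omega)]
    exact h4 i hi hij

theorem extendZero_le_fst_of_mem_BZsetBC (hp : p ∈ BZsetBC r lam) {i : ℕ} (hi : 1 ≤ i) :
    ∀ j, i ≤ j → j ≤ r → extendZero r lam (i + j - 1) ≤ p.1 i j := by
  induction i, hi using Nat.le_induction with
  | base =>
    intro j hj hjr
    rw [hp.1 j hj hjr, Nat.add_sub_cancel_left, extendZero_of_le lam hjr]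
  | succ i hi ih =>
    intro j hij hjr
    rw [show i + 1 + j - 1 = i + j by omega]
    exact (extendZero_le_snd_of_mem_BZsetBC hp hi ih j (by omega) hjr).trans
      (hp.2.1.2.1 i j hi (by omega) hjr)

theorem mem_Icc_of_mem_BZsetBC (hp : p ∈ BZsetBC r lam) {i j : ℕ} (hi : 1 ≤ i) (hij : i ≤ j)
    (hjr : j ≤ r) :
    p.1 i j ∈ Set.Icc (extendZero r lam (i + j - 1)) (extendZero r lam (j - i + 1)) ∧
      p.2 i j ∈ Set.Icc (extendZero r lam (i + j)) (extendZero r lam (j - i + 1)) :=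
  ⟨⟨extendZero_le_fst_of_mem_BZsetBC hp hi j hij hjr,
      (le_extendZero_of_mem_BZsetBC hp hi j hij hjr).1⟩,
    ⟨extendZero_le_snd_of_mem_BZsetBC hp hi (extendZero_le_fst_of_mem_BZsetBC hp hi) j hij hjr,
      (le_extendZero_of_mem_BZsetBC hp hi j hij hjr).2⟩⟩

end Bounds

section FreeDirections

variable {r : ℕ} {lam : ℕ → ℝ}

def IsFreeX (r : ℕ) (lam : ℕ → ℝ) (i j : ℕ) : Prop :=
  1 ≤ i ∧ i ≤ j ∧ j ≤ r ∧ extendZero r lam (i + j - 1) < extendZero r lam (j - i + 1)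

def IsFreeY (r : ℕ) (lam : ℕ → ℝ) (i j : ℕ) : Prop :=
  1 ≤ i ∧ i ≤ j ∧ j ≤ r ∧ extendZero r lam (i + j) < extendZero r lam (j - i + 1)

def freeDirections (r : ℕ) (lam : ℕ → ℝ) : Submodule ℝ BZPattern where
  carrier := {v | (∀ i j, ¬IsFreeX r lam i j → v.1 i j = 0) ∧
    ∀ i j, ¬IsFreeY r lam i j → v.2 i j = 0}
  add_mem' hv hw :=
    ⟨fun i j h => by simp [hv.1 i j h, hw.1 i j h], fun i j h => by simp [hv.2 i j h, hw.2 i j h]⟩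
  zero_mem' := ⟨fun _ _ _ => rfl, fun _ _ _ => rfl⟩
  smul_mem' a v hv := ⟨fun i j h => by simp [hv.1 i j h], fun i j h => by simp [hv.2 i j h]⟩

theorem sub_mem_freeDirections {p q : BZPattern} (hp : p ∈ BZsetBC r lam)
    (hq : q ∈ BZsetBC r lam) : p - q ∈ freeDirections r lam := by
  refine ⟨fun i j h => sub_eq_zero.2 ?_, fun i j h => sub_eq_zero.2 ?_⟩
  all_goals
    by_cases hr : 1 ≤ i ∧ i ≤ j ∧ j ≤ r
    swap
    · simp [hp.2.2.1 i j hr, hq.2.2.1 i j hr, hp.2.2.2 i j hr, hq.2.2.2 i j hr]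
    obtain ⟨h1, h2, h3⟩ := hr
    have hle := not_lt.1 fun hlt => h ⟨h1, h2, h3, hlt⟩
    have hp' := mem_Icc_of_mem_BZsetBC hp h1 h2 h3
    have hq' := mem_Icc_of_mem_BZsetBC hq h1 h2 h3
  · linarith [hp'.1.1, hp'.1.2, hq'.1.1, hq'.1.2]
  · linarith [hp'.2.1, hp'.2.2, hq'.2.1, hq'.2.2]

theorem vectorSpan_BZsetBC_le : vectorSpan ℝ (BZsetBC r lam) ≤ freeDirections r lam := by
  rw [vectorSpan_def, Submodule.span_le]
  rintro _ ⟨p, hp, q, hq, rfl⟩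
  exact sub_mem_freeDirections hp hq

instance : FiniteDimensional ℝ (freeDirections r lam) := by
  let restrict :
      BZPattern →ₗ[ℝ] (Fin (r + 1) → Fin (r + 1) → ℝ) × (Fin (r + 1) → Fin (r + 1) → ℝ) :=
    { toFun p := (fun a b => p.1 a b, fun a b => p.2 a b)
      map_add' _ _ := rfl
      map_smul' _ _ := rfl }
  refine Module.Finite.of_injective (restrict ∘ₗ (freeDirections r lam).subtype) ?_
  rintro ⟨v, hv⟩ ⟨w, hw⟩ h
  simp only [restrict, LinearMap.coe_comp, LinearMap.coe_mk, AddHom.coe_mk, Function.comp_apply,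
    Submodule.coe_subtype, Prod.mk.injEq] at h
  refine Subtype.ext (Prod.ext (funext₂ fun i j => ?_) (funext₂ fun i j => ?_))
  all_goals
    by_cases hr : i ≤ r ∧ j ≤ r
    swap
    · have hX : ¬IsFreeX r lam i j := fun h => hr ⟨h.2.1.trans h.2.2.1, h.2.2.1⟩
      have hY : ¬IsFreeY r lam i j := fun h => hr ⟨h.2.1.trans h.2.2.1, h.2.2.1⟩
      simp [hv.1 i j hX, hw.1 i j hX, hv.2 i j hY, hw.2 i j hY]
  · exact congrFun₂ h.1 ⟨i, by omega⟩ ⟨j, by omega⟩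
  · exact congrFun₂ h.2 ⟨i, by omega⟩ ⟨j, by omega⟩

end FreeDirections

section InteriorPattern

variable {r : ℕ} {lam : ℕ → ℝ}

/-- A point of `BZsetBC r lam` at which every inequality that is not forced to be an equality is
strict: each entry sits inside its interval from `mem_Icc_of_mem_BZsetBC`, at relative height
`1 / (2j)` for `x_{i,j}` and `1 / (2j + 1)` for `y_{i,j}`, heights that decrease along the chain
`x_{i,j} ≥ y_{i,j} ≥ x_{i,j+1}` of the BZ inequalities. -/
noncomputable def interiorPattern (r : ℕ) (lam : ℕ → ℝ) : BZPattern :=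
  (fun i j => if 1 ≤ i ∧ i ≤ j ∧ j ≤ r then extendZero r lam (i + j - 1) +
      (2 * j : ℝ)⁻¹ * (extendZero r lam (j - i + 1) - extendZero r lam (i + j - 1)) else 0,
    fun i j => if 1 ≤ i ∧ i ≤ j ∧ j ≤ r then extendZero r lam (i + j) +
      (2 * j + 1 : ℝ)⁻¹ * (extendZero r lam (j - i + 1) - extendZero r lam (i + j)) else 0)

theorem interiorPattern_add_smul_fst (v : BZPattern) (s : ℝ) {i j : ℕ}
    (h : 1 ≤ i ∧ i ≤ j ∧ j ≤ r) :
    (interiorPattern r lam + s • v).1 i j = extendZero r lam (i + j - 1) +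
      (2 * j : ℝ)⁻¹ * (extendZero r lam (j - i + 1) - extendZero r lam (i + j - 1)) +
      s * v.1 i j := by
  simp [interiorPattern, if_pos h]

theorem interiorPattern_add_smul_snd (v : BZPattern) (s : ℝ) {i j : ℕ}
    (h : 1 ≤ i ∧ i ≤ j ∧ j ≤ r) :
    (interiorPattern r lam + s • v).2 i j = extendZero r lam (i + j) +
      (2 * j + 1 : ℝ)⁻¹ * (extendZero r lam (j - i + 1) - extendZero r lam (i + j)) +
      s * v.2 i j := by
  simp [interiorPattern, if_pos h]

theorem inv_two_mul_add_one_lt_inv_two_mul {j : ℕ} (hj : 1 ≤ j) :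
    (2 * j + 1 : ℝ)⁻¹ < (2 * j : ℝ)⁻¹ := by
  have : (1 : ℝ) ≤ j := by exact_mod_cast hj
  rw [inv_lt_inv₀ (by positivity) (by positivity)]
  linarith

theorem inv_two_mul_succ_lt_inv_two_mul_add_one (j : ℕ) :
    (2 * ((j + 1 : ℕ) : ℝ))⁻¹ < (2 * j + 1 : ℝ)⁻¹ := by
  rw [inv_lt_inv₀ (by positivity) (by positivity)]
  push_cast
  linarith

theorem inv_two_mul_le_one {j : ℕ} (hj : 1 ≤ j) : (2 * j : ℝ)⁻¹ ≤ 1 := by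
  have : (1 : ℝ) ≤ j := by exact_mod_cast hj
  exact inv_le_one_of_one_le₀ (by linarith)

theorem inv_two_mul_add_one_le_one (j : ℕ) : (2 * j + 1 : ℝ)⁻¹ ≤ 1 :=
  inv_le_one_of_one_le₀ (by linarith [(Nat.cast_nonneg j : (0 : ℝ) ≤ j)])

theorem not_isFreeX_of_le {i j : ℕ}
    (h : extendZero r lam (j - i + 1) ≤ extendZero r lam (i + j - 1)) : ¬IsFreeX r lam i j :=
  fun hf => h.not_gt hf.2.2.2

theorem not_isFreeY_of_le {i j : ℕ}
    (h : extendZero r lam (j - i + 1) ≤ extendZero r lam (i + j)) : ¬IsFreeY r lam i j :=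
  fun hf => h.not_gt hf.2.2.2

theorem eventually_interiorPattern_snd_le_fst (hlam : IsDominant r lam) {v : BZPattern}
    (hv : v ∈ freeDirections r lam) {i j : ℕ} (h : 1 ≤ i ∧ i ≤ j ∧ j ≤ r) :
    ∀ᶠ s in 𝓝 (0 : ℝ),
      (interiorPattern r lam + s • v).2 i j ≤ (interiorPattern r lam + s • v).1 i j := by
  filter_upwards [eventually_interp_add_mul_le (hlam.anti (by omega) (by omega))
    (hlam.anti (by omega) (by omega)) (hlam.anti (by omega) (by omega)) le_rfl
    (by positivity : (0 : ℝ) ≤ (2 * j + 1 : ℝ)⁻¹)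
    (inv_two_mul_add_one_lt_inv_two_mul (h.1.trans h.2.1)) (inv_two_mul_le_one (h.1.trans h.2.1))
    (fun hd => hv.2 i j (not_isFreeY_of_le hd)) (fun hd => hv.1 i j (not_isFreeX_of_le hd))]
    with s hs
  rwa [interiorPattern_add_smul_fst v s h, interiorPattern_add_smul_snd v s h]

theorem eventually_interiorPattern_snd_le_fst_succ (hlam : IsDominant r lam) {v : BZPattern}
    (hv : v ∈ freeDirections r lam) {i j : ℕ} (h : 1 ≤ i ∧ i < j ∧ j ≤ r) :
    ∀ᶠ s in 𝓝 (0 : ℝ),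
      (interiorPattern r lam + s • v).2 i j ≤ (interiorPattern r lam + s • v).1 (i + 1) j := by
  filter_upwards [eventually_interp_add_mul_le (hlam.anti (by omega) (by omega))
    (hlam.anti (by omega) (by omega)) (hlam.anti (by omega) (by omega))
    (hlam.anti (by omega) (by omega)) (by positivity : (0 : ℝ) ≤ (2 * j + 1 : ℝ)⁻¹)
    (inv_two_mul_add_one_lt_inv_two_mul (j := j) (by omega)) (inv_two_mul_le_one (by omega))
    (fun hd => hv.2 i j (not_isFreeY_of_le hd)) (fun hd => hv.1 (i + 1) j (not_isFreeX_of_le hd))]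
    with s hs
  rwa [interiorPattern_add_smul_fst v s (by omega), interiorPattern_add_smul_snd v s (by omega)]

theorem eventually_interiorPattern_fst_succ_le_snd (hlam : IsDominant r lam) {v : BZPattern}
    (hv : v ∈ freeDirections r lam) {i j : ℕ} (h : 1 ≤ i ∧ i ≤ j ∧ j + 1 ≤ r) :
    ∀ᶠ s in 𝓝 (0 : ℝ),
      (interiorPattern r lam + s • v).1 i (j + 1) ≤ (interiorPattern r lam + s • v).2 i j ∧
        (interiorPattern r lam + s • v).1 (i + 1) (j + 1) ≤
          (interiorPattern r lam + s • v).2 i j := by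
  have ht := inv_two_mul_succ_lt_inv_two_mul_add_one j
  filter_upwards [eventually_interp_add_mul_le (hlam.anti (by omega) (by omega))
      (hlam.anti (by omega) (by omega)) (hlam.anti (by omega) (by omega))
      (hlam.anti (by omega) (by omega)) (by positivity) ht (inv_two_mul_add_one_le_one j)
      (fun hd => hv.1 i (j + 1) (not_isFreeX_of_le hd)) (fun hd => hv.2 i j (not_isFreeY_of_le hd)),
    eventually_interp_add_mul_le (hlam.anti (by omega) (by omega))
      (hlam.anti (by omega) (by omega)) (hlam.anti (by omega) (by omega))
      (hlam.anti (by omega) (by omega)) (by positivity) ht (inv_two_mul_add_one_le_one j)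
      (fun hd => hv.1 (i + 1) (j + 1) (not_isFreeX_of_le hd))
      (fun hd => hv.2 i j (not_isFreeY_of_le hd))]
    with s hs hs'
  rw [interiorPattern_add_smul_fst v s (by omega), interiorPattern_add_smul_fst v s (by omega),
    interiorPattern_add_smul_snd v s (by omega)]
  exact ⟨hs, hs'⟩

theorem eventually_nonneg_interiorPattern_snd (hlam : IsDominant r lam) {v : BZPattern}
    (hv : v ∈ freeDirections r lam) {i : ℕ} (h : 1 ≤ i ∧ i ≤ r) :
    ∀ᶠ s in 𝓝 (0 : ℝ), 0 ≤ (interiorPattern r lam + s • v).2 i r := by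
  filter_upwards [eventually_interp_add_mul_le (a := 0) le_rfl (hlam.anti (by omega) (by omega))
    (hlam.nonneg (by omega)) (hlam.nonneg (by omega)) le_rfl
    (inv_pos.2 (by positivity : (0 : ℝ) < 2 * r + 1)) (inv_two_mul_add_one_le_one r)
    (fun _ => rfl) (fun hd => hv.2 i r (not_isFreeY_of_le hd))] with s hs
  rw [interiorPattern_add_smul_snd v s (by omega)]
  linarith

theorem eventually_interiorPattern_add_smul_mem (hlam : IsDominant r lam) {v : BZPattern}
    (hv : v ∈ freeDirections r lam) :
    ∀ᶠ s in 𝓝 (0 : ℝ), interiorPattern r lam + s • v ∈ BZsetBC r lam := by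
  filter_upwards [
    eventually_forall_of_le (r := r) (fun i j (h : 1 ≤ i ∧ i ≤ j ∧ j ≤ r) => ⟨by omega, h.2.2⟩)
      fun i j h => eventually_interiorPattern_snd_le_fst hlam hv h,
    eventually_forall_of_le (r := r) (fun i j (h : 1 ≤ i ∧ i < j ∧ j ≤ r) => ⟨by omega, h.2.2⟩)
      fun i j h => eventually_interiorPattern_snd_le_fst_succ hlam hv h,
    eventually_forall_of_le (r := r)
      (fun i j (h : 1 ≤ i ∧ i ≤ j ∧ j + 1 ≤ r) => ⟨by omega, by omega⟩)
      fun i j h => eventually_interiorPattern_fst_succ_le_snd hlam hv h,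
    eventually_forall_of_le (r := r) (fun i j (h : 1 ≤ i ∧ i ≤ r ∧ j = r) => ⟨h.2.1, h.2.2.le⟩)
      fun i j h => h.2.2 ▸ eventually_nonneg_interiorPattern_snd hlam hv ⟨h.1, h.2.1⟩]
    with s h1 h2 h3 h4
  refine ⟨fun j hj hjr => ?_, ⟨fun i j a b c => h1 i j ⟨a, b, c⟩, fun i j a b c => h2 i j ⟨a, b, c⟩,
    fun i j a b c => h3 i j ⟨a, b, c⟩, fun i a b => h4 i r ⟨a, b, rfl⟩⟩, fun i j h => ?_,
    fun i j h => ?_⟩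
  · have hfix : ¬IsFreeX r lam 1 j := not_isFreeX_of_le (by rw [Nat.add_sub_cancel_left,
      Nat.sub_add_cancel hj])
    rw [interiorPattern_add_smul_fst v s ⟨le_rfl, hj, hjr⟩, hv.1 1 j hfix, Nat.add_sub_cancel_left,
      Nat.sub_add_cancel hj, extendZero_of_le lam hjr]
    ring
  · simp [interiorPattern, if_neg h, hv.1 i j fun hf => h ⟨hf.1, hf.2.1, hf.2.2.1⟩]
  · simp [interiorPattern, if_neg h, hv.2 i j fun hf => h ⟨hf.1, hf.2.1, hf.2.2.1⟩]

theorem interiorPattern_mem (hlam : IsDominant r lam) : interiorPattern r lam ∈ BZsetBC r lam := by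
  simpa using
    (eventually_interiorPattern_add_smul_mem hlam (freeDirections r lam).zero_mem).self_of_nhds

end InteriorPattern

section Surjectivity

variable {r : ℕ} {lam : ℕ → ℝ}

theorem IsDominant.exists_isFreeY (hlam : IsDominant r lam) (hpos : 0 < lam 1) {i : ℕ}
    (h1 : 1 ≤ i) (hi : i ≤ r) : ∃ j, IsFreeY r lam i j := by
  classical
  -- `a` is the last index with `λ_a > 0`
  set a := Nat.findGreatest (fun m => 0 < extendZero r lam m) r
  have hpos' : 0 < extendZero r lam 1 := by rwa [extendZero_of_le lam (by omega)]
  have ha1 : 1 ≤ a := Nat.le_findGreatest (by omega) hpos'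
  have har : a ≤ r := Nat.findGreatest_le r
  have ha : 0 < extendZero r lam a :=
    Nat.findGreatest_spec (P := fun m => 0 < extendZero r lam m) (m := 1) (by omega) hpos'
  have ha' : extendZero r lam (a + 1) ≤ 0 := by
    rcases Nat.lt_or_ge r (a + 1) with h | h
    · rw [extendZero_of_lt lam h]
    · exact not_lt.1 (Nat.findGreatest_is_greatest (Nat.lt_succ_self a) h)
  refine ⟨max i (a + 1 - i), h1, le_max_left _ _, by omega, ?_⟩
  calc extendZero r lam (i + max i (a + 1 - i)) ≤ extendZero r lam (a + 1) :=
        hlam.anti (by omega) (by omega)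
    _ < extendZero r lam a := ha'.trans_lt ha
    _ ≤ extendZero r lam (max i (a + 1 - i) - i + 1) := hlam.anti (by omega) (by omega)

theorem map_wtMap_freeDirections (h : ∀ i, 1 ≤ i → i ≤ r → ∃ j, IsFreeY r lam i j) :
    (freeDirections r lam).map (wtMap r) = ⊤ := by
  rw [eq_top_iff, ← (Pi.basisFun ℝ (Fin r)).span_eq, Submodule.span_le]
  rintro _ ⟨k, rfl⟩
  obtain ⟨j, hj⟩ := h (k + 1) (by omega) k.isLt
  refine ⟨(0, Pi.single (k + 1 : ℕ) (Pi.single j (-1 / 2 : ℝ))),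
    ⟨fun _ _ _ => rfl, fun a b hab => ?_⟩, funext fun m => ?_⟩
  · by_cases ha : a = k + 1
    · subst ha
      have hb : b ≠ j := fun hb => hab (hb ▸ hj)
      simp [hb]
    · simp [ha]
  · by_cases hm : m = k
    · subst hm
      norm_num [wtMap, wtBC, sum_pi_single', hj.2.1, hj.2.2.1]
    · simp [wtMap, wtBC, hm, Fin.val_inj]

end Surjectivity

section Existence

/-- The increments of `k ↦ min (λ₁ - λ_k) d` fit into the gaps `λ_{k-1} - λ_k`, so the raised row
still interlaces with `λ`. -/
def raiseRow (lam : ℕ → ℝ) (d : ℝ) (k : ℕ) : ℝ :=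
  lam k + (min (lam 1 - lam k) d - min (lam 1 - lam (k - 1)) d)

variable {n : ℕ} {lam : ℕ → ℝ} {d : ℝ}

theorem raiseRow_mem_Icc (hlam : IsDominant (n + 1) lam) {k : ℕ} (h2 : 2 ≤ k) (hk : k ≤ n + 1) :
    raiseRow lam d k ∈ Set.Icc (lam k) (lam (k - 1)) := by
  have h := min_sub_min_mem_Icc (by linarith [hlam.le_of_le (by omega) (Nat.sub_le k 1) hk] :
    lam 1 - lam (k - 1) ≤ lam 1 - lam k) d
  rw [raiseRow]
  exact ⟨by linarith [h.1], by linarith [h.2]⟩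

theorem IsDominant.raiseRow_shift (hlam : IsDominant (n + 1) lam) (d : ℝ) :
    IsDominant n (fun k => raiseRow lam d (k + 1)) :=
  isDominant_of_succ_le (fun i _ _ => (raiseRow_mem_Icc hlam (by omega) (by omega)).2.trans
    (raiseRow_mem_Icc hlam (by omega) (by omega)).1) fun _ =>
      (hlam.nonneg_of_le (by omega) le_rfl).trans (raiseRow_mem_Icc hlam (by omega) le_rfl).1

theorem sum_raiseRow (hd : 0 ≤ d) {J : ℕ} (hJ : 1 ≤ J) :
    ∑ k ∈ Icc 2 J, raiseRow lam d k = ∑ k ∈ Icc 2 J, lam k + min (lam 1 - lam J) d := by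
  induction J, hJ using Nat.le_induction with
  | base => simp [hd]
  | succ J hJ ih =>
    rw [sum_Icc_succ_top (by omega), sum_Icc_succ_top (by omega), ih, raiseRow,
      Nat.add_sub_cancel]
    ring

theorem le_sum_raiseRow_sub {mu : ℕ → ℝ} {η : ℝ} (hmu : IsDominant (n + 1) mu) (hη : 0 ≤ η)
    (hD : ∀ j, 1 ≤ j → j ≤ n + 1 → η ≤ ∑ k ∈ Icc 1 j, (lam k - mu k)) {j : ℕ} (h1 : 1 ≤ j)
    (hj : j ≤ n) :
    η / 2 ≤ ∑ k ∈ Icc 1 j, (raiseRow lam (lam 1 - mu 1 - η / 2) (k + 1) - mu (k + 1)) := by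
  have hd : 0 ≤ lam 1 - mu 1 - η / 2 := by
    have := hD 1 le_rfl (by omega)
    rw [Icc_self, sum_singleton] at this
    linarith
  have hsplit : ∑ k ∈ Icc 1 (j + 1), (lam k - mu k) =
      lam 1 - mu 1 + (∑ k ∈ Icc 2 (j + 1), lam k - ∑ k ∈ Icc 2 (j + 1), mu k) := by
    rw [← sum_sub_distrib, show 2 = 1 + 1 from rfl, Icc_add_one_left_eq_Ioc,
      ← sum_Ioc_add_eq_sum_Icc (by omega)]
    ring
  have hstep := sum_Icc_succ_top (by omega : 1 ≤ j + 1) fun k => lam k - mu k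
  rw [← sum_Icc_succ_succ (fun k => raiseRow lam _ k - mu k), sum_sub_distrib,
    sum_raiseRow hd (by omega)]
  have hDj := hD j h1 (by omega)
  have hDj1 := hD (j + 1) (by omega) (by omega)
  have hmu1 := hmu.le_of_le le_rfl (by omega : 1 ≤ j + 1) (by omega)
  rcases min_cases (lam 1 - lam (j + 1)) (lam 1 - mu 1 - η / 2) with ⟨h, -⟩ | ⟨h, -⟩ <;>
    rw [h] <;> linarith

/-- The rank `n + 1` pattern with first rows `x_{1,·} = lam`, `y_{1,·} = y`, whose rows
`x_{i+1,·}`, `y_{i+1,·}` are the rows `i` of the rank `n` pattern `p`, shifted one column right. -/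
def stackPattern (n : ℕ) (lam y : ℕ → ℝ) (p : BZPattern) : BZPattern :=
  (fun i j => if 1 ≤ i ∧ i ≤ j ∧ j ≤ n + 1 then if i = 1 then lam j else p.1 (i - 1) (j - 1)
    else 0,
   fun i j => if 1 ≤ i ∧ i ≤ j ∧ j ≤ n + 1 then if i = 1 then y j else p.2 (i - 1) (j - 1)
    else 0)

variable {y x : ℕ → ℝ} {p : BZPattern} {i j : ℕ}

theorem stackPattern_fst_one (h1 : 1 ≤ j) (h2 : j ≤ n + 1) :
    (stackPattern n lam y p).1 1 j = lam j := by
  simp [stackPattern, h1, h2]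

theorem stackPattern_snd_one (h1 : 1 ≤ j) (h2 : j ≤ n + 1) :
    (stackPattern n lam y p).2 1 j = y j := by
  simp [stackPattern, h1, h2]

theorem stackPattern_fst_succ (h1 : 1 ≤ i) (h2 : i ≤ j) (h3 : j ≤ n) :
    (stackPattern n lam y p).1 (i + 1) (j + 1) = p.1 i j := by
  simp [stackPattern, h2, h3, show i ≠ 0 by omega]

theorem stackPattern_snd_succ (h1 : 1 ≤ i) (h2 : i ≤ j) (h3 : j ≤ n) :
    (stackPattern n lam y p).2 (i + 1) (j + 1) = p.2 i j := by
  simp [stackPattern, h2, h3, show i ≠ 0 by omega]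

theorem stackPattern_mem (hp : p ∈ BZsetBC n (fun k => x (k + 1)))
    (hy : ∀ j, 1 ≤ j → j ≤ n + 1 → y j ≤ lam j) (hyx : ∀ j, 2 ≤ j → j ≤ n + 1 → y j ≤ x j)
    (hly : ∀ j, 1 ≤ j → j ≤ n → lam (j + 1) ≤ y j ∧ x (j + 1) ≤ y j) (hy0 : 0 ≤ y (n + 1)) :
    stackPattern n lam y p ∈ BZsetBC (n + 1) lam := by
  obtain ⟨htop, ⟨p1, p2, p3, p4⟩, -, -⟩ := hp
  refine ⟨fun j h1 h2 => stackPattern_fst_one h1 h2, ⟨fun i j h1 h2 h3 => ?_,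
    fun i j h1 h2 h3 => ?_, fun i j h1 h2 h3 => ?_, fun i h1 h2 => ?_⟩,
    fun i j h => by simp [stackPattern, h], fun i j h => by simp [stackPattern, h]⟩
  · rcases h1.eq_or_lt with rfl | h1
    · rw [stackPattern_fst_one h2 h3, stackPattern_snd_one h2 h3]
      exact hy j h2 h3
    obtain ⟨i, rfl⟩ : ∃ i', i = i' + 1 := ⟨i - 1, by omega⟩
    obtain ⟨j, rfl⟩ : ∃ j', j = j' + 1 := ⟨j - 1, by omega⟩
    rw [stackPattern_fst_succ (by omega) (by omega) (by omega),
      stackPattern_snd_succ (by omega) (by omega) (by omega)]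
    exact p1 i j (by omega) (by omega) (by omega)
  · obtain ⟨j, rfl⟩ : ∃ j', j = j' + 1 := ⟨j - 1, by omega⟩
    rcases h1.eq_or_lt with rfl | h1
    · rw [stackPattern_snd_one (by omega) h3, stackPattern_fst_succ le_rfl (by omega) (by omega),
        htop j (by omega) (by omega)]
      exact hyx (j + 1) (by omega) h3
    obtain ⟨i, rfl⟩ : ∃ i', i = i' + 1 := ⟨i - 1, by omega⟩
    rw [stackPattern_fst_succ (by omega) (by omega) (by omega),
      stackPattern_snd_succ (by omega) (by omega) (by omega)]
    exact p2 i j (by omega) (by omega) (by omega)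
  · rcases h1.eq_or_lt with rfl | h1
    · rw [stackPattern_fst_one (by omega) h3, stackPattern_fst_succ le_rfl h2 (by omega),
        stackPattern_snd_one h2 (by omega), htop j h2 (by omega)]
      exact hly j h2 (by omega)
    obtain ⟨i, rfl⟩ : ∃ i', i = i' + 1 := ⟨i - 1, by omega⟩
    obtain ⟨j, rfl⟩ : ∃ j', j = j' + 1 := ⟨j - 1, by omega⟩
    rw [stackPattern_fst_succ (by omega) (by omega) (by omega),
      stackPattern_fst_succ (by omega) (by omega) (by omega),
      stackPattern_snd_succ (by omega) (by omega) (by omega)]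
    exact p3 i j (by omega) (by omega) (by omega)
  · rcases h1.eq_or_lt with rfl | h1
    · rw [stackPattern_snd_one (by omega) le_rfl]
      exact hy0
    obtain ⟨i, rfl⟩ : ∃ i', i = i' + 1 := ⟨i - 1, by omega⟩
    rw [stackPattern_snd_succ (by omega) (by omega) le_rfl]
    exact p4 i (by omega) (by omega)

theorem wtBC_stackPattern_one (htop : ∀ j, 1 ≤ j → j ≤ n → p.1 1 j = x (j + 1)) :
    wtBC (n + 1) (stackPattern n lam y p) 1 = ∑ j ∈ Icc 1 (n + 1), lam j +
      ∑ j ∈ Icc 2 (n + 1), x j - 2 * ∑ j ∈ Icc 1 (n + 1), y j := by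
  have hx : ∑ j ∈ Icc 1 n, (stackPattern n lam y p).1 (1 + 1) (j + 1) = ∑ j ∈ Icc 1 n, x (j + 1) :=
    sum_congr rfl fun j hj => by
      rw [mem_Icc] at hj
      rw [stackPattern_fst_succ le_rfl hj.1 hj.2, htop j hj.1 hj.2]
  rw [wtBC, sum_Icc_succ_succ _ 1 n, hx, ← sum_Icc_succ_succ x,
    sum_congr rfl fun j hj => stackPattern_fst_one (mem_Icc.1 hj).1 (mem_Icc.1 hj).2,
    sum_congr rfl fun j hj => stackPattern_snd_one (mem_Icc.1 hj).1 (mem_Icc.1 hj).2]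

theorem wtBC_stackPattern_succ (hi : 1 ≤ i) :
    wtBC (n + 1) (stackPattern n lam y p) (i + 1) = wtBC n p i := by
  rw [wtBC, wtBC, sum_Icc_succ_succ _ i n, sum_Icc_succ_succ _ (i + 1) n,
    sum_Icc_succ_succ _ i n,
    sum_congr rfl fun j hj => stackPattern_fst_succ hi (mem_Icc.1 hj).1 (mem_Icc.1 hj).2,
    sum_congr rfl fun j hj => stackPattern_fst_succ (by omega) (mem_Icc.1 hj).1 (mem_Icc.1 hj).2,
    sum_congr rfl fun j hj => stackPattern_snd_succ hi (mem_Icc.1 hj).1 (mem_Icc.1 hj).2]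

theorem exists_first_y_row (hlam : IsDominant (n + 1) lam) {x : ℕ → ℝ}
    (hx : ∀ k, 2 ≤ k → k ≤ n + 1 → x k ∈ Set.Icc (lam k) (lam (k - 1))) {T : ℝ}
    (hT : ∑ k ∈ Icc 2 (n + 1), x k ≤ T) (hT' : T ≤ ∑ k ∈ Icc 1 (n + 1), lam k) :
    ∃ y : ℕ → ℝ, ((∀ j, 1 ≤ j → j ≤ n + 1 → y j ≤ lam j) ∧
      (∀ j, 2 ≤ j → j ≤ n + 1 → y j ≤ x j) ∧
      (∀ j, 1 ≤ j → j ≤ n → lam (j + 1) ≤ y j ∧ x (j + 1) ≤ y j) ∧ 0 ≤ y (n + 1)) ∧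
      ∑ j ∈ Icc 1 (n + 1), y j = T := by
  have hA : ∑ j ∈ Icc 1 (n + 1), (if j ≤ n then x (j + 1) else 0) = ∑ k ∈ Icc 2 (n + 1), x k := by
    rw [sum_Icc_succ_top (by omega), if_neg (by omega), add_zero,
      sum_congr rfl fun j hj => if_pos (mem_Icc.1 hj).2, ← sum_Icc_succ_succ x]
  obtain ⟨y, hy, hysum⟩ := exists_le_le_sum_eq (s := Icc 1 (n + 1)) (B := lam)
    (fun j hj => by
      rw [mem_Icc] at hj
      split_ifs with h
      · exact (hx (j + 1) (by omega) (by omega)).2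
      · exact hlam.nonneg_of_le hj.1 hj.2) (hA.symm ▸ hT) hT'
  have hy' : ∀ j, 1 ≤ j → j ≤ n + 1 → _ := fun j h1 h2 => hy j (mem_Icc.2 ⟨h1, h2⟩)
  refine ⟨y, ⟨fun j h1 h2 => (hy' j h1 h2).2,
    fun j h2 hj => (hy' j (by omega) hj).2.trans (hx j h2 hj).1, fun j h1 hj => ?_, ?_⟩, hysum⟩
  · have h := (hy' j h1 (by omega)).1
    rw [if_pos hj] at h
    exact ⟨(hx (j + 1) (by omega) (by omega)).1.trans h, h⟩
  · simpa using (hy' (n + 1) (by omega) le_rfl).1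

theorem exists_mem_BZsetBC_succ_wtBC_eq (hlam : IsDominant (n + 1) lam)
    (hx : ∀ k, 2 ≤ k → k ≤ n + 1 → x k ∈ Set.Icc (lam k) (lam (k - 1)))
    (hp : p ∈ BZsetBC n (fun k => x (k + 1))) {ν₁ : ℝ}
    (hT : ∑ k ∈ Icc 2 (n + 1), x k ≤
      (∑ k ∈ Icc 1 (n + 1), lam k + ∑ k ∈ Icc 2 (n + 1), x k - ν₁) / 2)
    (hT' : (∑ k ∈ Icc 1 (n + 1), lam k + ∑ k ∈ Icc 2 (n + 1), x k - ν₁) / 2 ≤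
      ∑ k ∈ Icc 1 (n + 1), lam k) :
    ∃ q ∈ BZsetBC (n + 1) lam, wtBC (n + 1) q 1 = ν₁ ∧
      ∀ i, 1 ≤ i → wtBC (n + 1) q (i + 1) = wtBC n p i := by
  obtain ⟨y, ⟨hy1, hy2, hy3, hy4⟩, hysum⟩ := exists_first_y_row hlam hx hT hT'
  refine ⟨stackPattern n lam y p, stackPattern_mem hp hy1 hy2 hy3 hy4, ?_,
    fun i hi => wtBC_stackPattern_succ hi⟩
  rw [wtBC_stackPattern_one hp.1, hysum]
  ring

theorem zero_mem_BZsetBC_zero (lam : ℕ → ℝ) : (0 : BZPattern) ∈ BZsetBC 0 lam :=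
  ⟨fun _ _ _ => by omega, ⟨fun _ _ _ _ _ => by omega, fun _ _ _ _ _ => by omega,
    fun _ _ _ _ _ => by omega, fun _ _ _ => by omega⟩, fun _ _ _ => rfl, fun _ _ _ => rfl⟩

theorem exists_mem_BZsetBC_wtBC_eq (r : ℕ) :
    ∀ {lam mu nu : ℕ → ℝ} {η : ℝ}, IsDominant r lam → IsDominant r mu →
      (∀ j, 1 ≤ j → j ≤ r → η ≤ ∑ k ∈ Icc 1 j, (lam k - mu k)) →
      (∀ k, 1 ≤ k → k ≤ r → |nu k - mu k| ≤ η / 2 ^ r) →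
      ∃ p ∈ BZsetBC r lam, ∀ i, 1 ≤ i → i ≤ r → wtBC r p i = nu i := by
  induction r with
  | zero => exact fun _ _ _ _ => ⟨0, zero_mem_BZsetBC_zero _, fun _ _ _ => by omega⟩
  | succ n ih =>
    intro lam mu nu η hlam hmu hD hnu
    have hnu1 := abs_le.1 (hnu 1 le_rfl (by omega))
    have hη : 0 ≤ η := by
      simpa using (le_div_iff₀ (by positivity)).1 ((abs_nonneg _).trans (hnu 1 le_rfl (by omega)))
    have hε : η / 2 ^ (n + 1) ≤ η / 2 :=
      div_le_div_of_nonneg_left hη two_pos (le_self_pow₀ one_le_two (by omega))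
    have hD1 := hD 1 le_rfl (by omega)
    rw [Icc_self, sum_singleton] at hD1
    -- raising the second row by at most `d` keeps the partial sums of the recursion `≥ η / 2`
    set d := lam 1 - mu 1 - η / 2 with hd_def
    have hd : 0 ≤ d := by linarith
    obtain ⟨p, hp, hpwt⟩ := ih (lam := fun k => raiseRow lam d (k + 1))
      (mu := fun k => mu (k + 1)) (nu := fun k => nu (k + 1)) (η := η / 2)
      (hlam.raiseRow_shift d) hmu.shift (fun j h1 hj => le_sum_raiseRow_sub hmu hη hD h1 hj)
      (fun k h1 hk => (hnu (k + 1) (by omega) (by omega)).trans_eq (by ring))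
    have hsum := sum_raiseRow (lam := lam) hd (J := n + 1) (by omega)
    have hσ : 0 ≤ min (lam 1 - lam (n + 1)) d :=
      le_min (sub_nonneg.2 (hlam.le_of_le le_rfl (by omega) le_rfl)) hd
    have hσd := min_le_right (lam 1 - lam (n + 1)) d
    have hlam1 : ∑ k ∈ Icc 1 (n + 1), lam k = lam 1 + ∑ k ∈ Icc 2 (n + 1), lam k := by
      rw [← sum_Ioc_add_eq_sum_Icc (by omega), add_comm]
      rfl
    have hmu1 := hmu.nonneg_of_le le_rfl (by omega)
    obtain ⟨q, hq, hq1, hqsucc⟩ := exists_mem_BZsetBC_succ_wtBC_eq (ν₁ := nu 1) hlam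
      (fun k h2 hk => raiseRow_mem_Icc hlam h2 hk) hp (by linarith) (by linarith)
    refine ⟨q, hq, fun i h1 h2 => ?_⟩
    rcases h1.eq_or_lt with rfl | h1
    · exact hq1
    · obtain ⟨i, rfl⟩ : ∃ i', i = i' + 1 := ⟨i - 1, by omega⟩
      rw [hqsucc i (by omega)]
      exact hpwt i (by omega) (by omega)

end Existence

section Fiber

variable {r : ℕ} {lam mu : ℕ → ℝ}

theorem exists_interior_mem_BZsetBC_wtBC_eq (hlam : IsDominant r lam) (hmu : IsDominant r mu)
    {η : ℝ} (hη : 0 < η) (hD : ∀ j, 1 ≤ j → j ≤ r → η ≤ ∑ k ∈ Icc 1 j, (lam k - mu k)) :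
    ∃ q ∈ BZsetBC r lam, (∀ i, 1 ≤ i → i ≤ r → wtBC r q i = mu i) ∧
      ∀ v ∈ freeDirections r lam, ∀ᶠ s in 𝓝 (0 : ℝ), q + s • v ∈ BZsetBC r lam := by
  set f := interiorPattern r lam
  -- realise the weight `μ + δ (μ - wt f)`, then average the pattern with `f` to get weight `μ`
  have hsmall : ∀ᶠ δ in 𝓝 (0 : ℝ), ∀ k ∈ Icc 1 r, |δ * (mu k - wtBC r f k)| ≤ η / 2 ^ r :=
    (eventually_all_finset _).2 fun k _ =>
      ((continuous_id.mul continuous_const).abs.tendsto' 0 0 (by simp)).eventually_le_const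
        (by positivity)
  obtain ⟨δ, hδ, hδ0 : 0 < δ⟩ :=
    (hsmall.filter_mono nhdsWithin_le_nhds |>.and self_mem_nhdsWithin).exists (f := 𝓝[>] (0 : ℝ))
  obtain ⟨p, hp, hpwt⟩ := exists_mem_BZsetBC_wtBC_eq r hlam hmu hD
    (nu := fun k => mu k + δ * (mu k - wtBC r f k))
    fun k h1 h2 => by simpa using hδ k (mem_Icc.2 ⟨h1, h2⟩)
  have hab : (1 + δ)⁻¹ + δ / (1 + δ) = 1 := by field_simp
  refine ⟨(1 + δ)⁻¹ • p + (δ / (1 + δ)) • f, convex_BZsetBC r lam hp (interiorPattern_mem hlam)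
    (by positivity) (by positivity) hab, fun i h1 h2 => ?_, fun v hv =>
    (convex_BZsetBC r lam).eventually_combo_add_smul_mem hp
      (eventually_interiorPattern_add_smul_mem hlam hv) (by positivity) (by positivity) hab⟩
  rw [wtBC_add, wtBC_smul, wtBC_smul, hpwt i h1 h2]
  field_simp
  ring

end Fiber

theorem dim_BZ_weight_fiber_BC_general
    (r : ℕ) (lam mu : ℕ → ℝ)
    (hlam_dec : ∀ i, 1 ≤ i → i < r → lam (i + 1) ≤ lam i) (hlam_nonneg : 0 ≤ lam r)
    (hmu_dec : ∀ i, 1 ≤ i → i < r → mu (i + 1) ≤ mu i) (hmu_nonneg : 0 ≤ mu r)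
    (c : ℕ → ℤ) (hc : ∀ i, 1 ≤ i → i ≤ r → 0 < c i)
    (hdiff : (fun k : Fin r => lam ((k : ℕ) + 1) - mu ((k : ℕ) + 1)) =
      ∑ i ∈ Finset.Icc 1 r, (c i : ℝ) • simpleRootB r i) :
    affDim {p ∈ BZsetBC r lam | ∀ i, 1 ≤ i → i ≤ r → wtBC r p i = mu i} =
      affDim (BZsetBC r lam) - r := by
  have hlam := isDominant_of_succ_le hlam_dec fun _ => hlam_nonneg
  have hmu := isDominant_of_succ_le hmu_dec fun _ => hmu_nonneg
  have hD (j : ℕ) (h1 : 1 ≤ j) (hj : j ≤ r) : (1 : ℝ) ≤ ∑ k ∈ Icc 1 j, (lam k - mu k) := by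
    rw [sum_Icc_sub_eq_of_eq_sum_smul_simpleRootB hdiff h1 hj]
    exact_mod_cast hc j h1 hj
  have hfree (i : ℕ) (h1 : 1 ≤ i) (hi : i ≤ r) : ∃ j, IsFreeY r lam i j := by
    have hD1 := hD 1 le_rfl (h1.trans hi)
    rw [Icc_self, sum_singleton] at hD1
    exact hlam.exists_isFreeY (by linarith [hmu.nonneg_of_le le_rfl (h1.trans hi)]) h1 hi
  obtain ⟨q, hq, hqwt, hint⟩ := exists_interior_mem_BZsetBC_wtBC_eq hlam hmu one_pos hD
  have hfiber : {p ∈ BZsetBC r lam | ∀ i, 1 ≤ i → i ≤ r → wtBC r p i = mu i} =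
      {p ∈ BZsetBC r lam | wtMap r p = wtMap r q} := by
    ext p
    simp only [Set.mem_ofPred_eq, wtMap_eq_wtMap_iff]
    exact and_congr_right fun _ => forall_congr' fun i =>
      imp_congr_right fun h1 => imp_congr_right fun hi => by rw [hqwt i h1 hi]
  have hrank := finrank_inf_ker_add_finrank (wtMap r) (map_wtMap_freeDirections hfree)
  rw [Module.finrank_fin_fun] at hrank
  rw [affDim, affDim, hfiber, vectorSpan_sep_eq_inf_ker vectorSpan_BZsetBC_le hq hint,
    vectorSpan_eq_of_eventually_add_smul_mem vectorSpan_BZsetBC_le hq hint]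
  exact Nat.eq_sub_of_add_eq hrank

/-- **Codimension of the weight fiber in the type `B`/`C` BZ-polytope.**
For a primitive pair `(λ, μ)` (i.e. `λ − μ = ∑ c_i α_i` with all `c_i` positive integers,
`α_i = e_i − e_{i+1}` for `i < r`, `α_r = e_r`), the affine dimension of
`BZ_{λ,μ} = {T ∈ BZ_λ : wt T = μ}` equals that of `BZ_λ` minus `r`. -/
theorem dim_BZ_weight_fiber_BC
    (r : ℕ) (hr : 1 ≤ r) (lam mu : ℕ → ℝ)
    (hlam_dec : ∀ i, 1 ≤ i → i < r → lam (i + 1) ≤ lam i) (hlam_nonneg : 0 ≤ lam r)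
    (hmu_dec : ∀ i, 1 ≤ i → i < r → mu (i + 1) ≤ mu i) (hmu_nonneg : 0 ≤ mu r)
    (c : ℕ → ℤ) (hc : ∀ i, 1 ≤ i → i ≤ r → 0 < c i)
    (hdiff : (fun k : Fin r => lam ((k : ℕ) + 1) - mu ((k : ℕ) + 1)) =
      ∑ i ∈ Finset.Icc 1 r, (c i : ℝ) • simpleRootB r i) :
    affDim {p ∈ BZsetBC r lam | ∀ i, 1 ≤ i → i ≤ r → wtBC r p i = mu i} =
      affDim (BZsetBC r lam) - r :=
  dim_BZ_weight_fiber_BC_general r lam mu hlam_dec hlam_nonneg hmu_dec hmu_nonneg c hc hdiff
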